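/- arXiv:2501.13408 — 3 statements merged into one kernel-verified Lean document; each statement's English description precedes it below -/
import Mathlib

section
/- Let (T, Γ) be a Γ-semigroup and let A be a least Γ-two-sided ideal of T (a Γ-two-sided ideal such that every Γ-two-sided ideal of T contained in A equals A). Then A is a simple Γ-semigroup: every nonempty subset B ⊆ A satisfying AΓB ⊆ B and BΓA ⊆ B equals A. -/
/-- The set product AΓB = {aγb : a ∈ A, γ ∈ Γ, b ∈ B} for a Γ-semigroup
with multiplication `mul : T → G → T → T`. -/
def gprod {T G : Type*} (mul : T → G → T → T) (A B : Set T) : Set T :=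
  {x | ∃ a ∈ A, ∃ γ : G, ∃ b ∈ B, x = mul a γ b}

/-- A nonempty subset B with TΓB ⊆ B. -/
def IsLeftIdeal {T G : Type*} (mul : T → G → T → T) (B : Set T) : Prop :=
  B.Nonempty ∧ gprod mul Set.univ B ⊆ B

/-- A nonempty subset B with BΓT ⊆ B. -/
def IsRightIdeal {T G : Type*} (mul : T → G → T → T) (B : Set T) : Prop :=
  B.Nonempty ∧ gprod mul B Set.univ ⊆ B

/-- A Γ-two-sided ideal. -/
def IsTwoSidedIdeal {T G : Type*} (mul : T → G → T → T) (B : Set T) : Prop :=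
  IsLeftIdeal mul B ∧ IsRightIdeal mul B

/-- z is a zero element: eαz = zαe = z for all e, α. -/
def IsZero {T G : Type*} (mul : T → G → T → T) (z : T) : Prop :=
  ∀ (e : T) (α : G), mul e α z = z ∧ mul z α e = z

/-- A least Γ-left ideal: every Γ-left ideal contained in it equals it. -/
def IsLeastLeftIdeal {T G : Type*} (mul : T → G → T → T) (H : Set T) : Prop :=
  IsLeftIdeal mul H ∧ ∀ B : Set T, IsLeftIdeal mul B → B ⊆ H → B = H

/-- A least Γ-two-sided ideal. -/
def IsLeastTwoSidedIdeal {T G : Type*} (mul : T → G → T → T) (A : Set T) : Prop :=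
  IsTwoSidedIdeal mul A ∧ ∀ B : Set T, IsTwoSidedIdeal mul B → B ⊆ A → B = A

/-- A 0-least Γ-left ideal. -/
def IsZeroLeastLeftIdeal {T G : Type*} (mul : T → G → T → T) (z : T) (H : Set T) : Prop :=
  IsLeftIdeal mul H ∧ H ≠ {z} ∧
    ∀ B : Set T, IsLeftIdeal mul B → B ⊆ H → B = {z} ∨ B = H

/-- A 0-least Γ-right ideal. -/
def IsZeroLeastRightIdeal {T G : Type*} (mul : T → G → T → T) (z : T) (H : Set T) : Prop :=
  IsRightIdeal mul H ∧ H ≠ {z} ∧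
    ∀ B : Set T, IsRightIdeal mul B → B ⊆ H → B = {z} ∨ B = H

/-- A 0-least Γ-two-sided ideal. -/
def IsZeroLeastTwoSidedIdeal {T G : Type*} (mul : T → G → T → T) (z : T) (H : Set T) : Prop :=
  IsTwoSidedIdeal mul H ∧ H ≠ {z} ∧
    ∀ B : Set T, IsTwoSidedIdeal mul B → B ⊆ H → B = {z} ∨ B = H

/-- 0-simple: TΓT ≠ {0} and the only Γ-two-sided ideals are {0} and T. -/
def IsZeroSimple {T G : Type*} (mul : T → G → T → T) (z : T) : Prop :=
  gprod mul Set.univ Set.univ ≠ {z} ∧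
    ∀ B : Set T, IsTwoSidedIdeal mul B → B = {z} ∨ B = Set.univ

/-- e is an idempotent: eαe = e for some α. -/
def IsIdempotent {T G : Type*} (mul : T → G → T → T) (e : T) : Prop :=
  ∃ α : G, mul e α e = e

/-- The partial order on idempotents: e ≤ f iff exf = fye = e for some x, y ∈ Γ. -/
def IdemLe {T G : Type*} (mul : T → G → T → T) (e f : T) : Prop :=
  ∃ x y : G, mul e x f = e ∧ mul f y e = e

/-- A primitive idempotent: nonzero, and minimal among nonzero idempotents. -/
def IsPrimitiveIdempotent {T G : Type*} (mul : T → G → T → T) (z e : T) : Prop :=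
  e ≠ z ∧ IsIdempotent mul e ∧
    ∀ f : T, f ≠ z → IsIdempotent mul f → IdemLe mul f e → f = e

/-- Completely 0-simple: 0-simple with a primitive idempotent. -/
def IsCompletelyZeroSimple {T G : Type*} (mul : T → G → T → T) (z : T) : Prop :=
  IsZeroSimple mul z ∧ ∃ e : T, IsPrimitiveIdempotent mul z e

/-- Green's relation L: e L f iff {e} ∪ TΓe = {f} ∪ TΓf. -/
def LRel {T G : Type*} (mul : T → G → T → T) (e f : T) : Prop :=
  insert e (gprod mul Set.univ {e}) = insert f (gprod mul Set.univ {f})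

/-- Green's relation R: e R f iff {e} ∪ eΓT = {f} ∪ fΓT. -/
def RRel {T G : Type*} (mul : T → G → T → T) (e f : T) : Prop :=
  insert e (gprod mul {e} Set.univ) = insert f (gprod mul {f} Set.univ)

/-- Green's relation D = L ∘ R. -/
def DRel {T G : Type*} (mul : T → G → T → T) (e f : T) : Prop :=
  ∃ c : T, LRel mul e c ∧ RRel mul c f

/-- The Γ-two-sided ideal generated by e: {e} ∪ TΓe ∪ eΓT ∪ TΓeΓT. -/
def GenTwo {T G : Type*} (mul : T → G → T → T) (e : T) : Set T :=
  {e} ∪ gprod mul Set.univ {e} ∪ gprod mul {e} Set.univ ∪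
    gprod mul (gprod mul Set.univ {e}) Set.univ

/-- A Γ-prime ideal. -/
def IsPrimeIdeal {T G : Type*} (mul : T → G → T → T) (Q : Set T) : Prop :=
  IsTwoSidedIdeal mul Q ∧
    ∀ E F : Set T, IsTwoSidedIdeal mul E → IsTwoSidedIdeal mul F →
      gprod mul E F ⊆ Q → E ⊆ Q ∨ F ⊆ Q

/-- A Γ-two-sided ideal of the Γ-semigroup H (a subset of T closed as an ideal of H). -/
def IsTwoSidedIdealIn {T G : Type*} (mul : T → G → T → T) (H B : Set T) : Prop :=
  B.Nonempty ∧ B ⊆ H ∧ gprod mul H B ⊆ B ∧ gprod mul B H ⊆ B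

/-! If `B ⊆ A` absorbs `A` on both sides, then `AΓBΓA` is a Γ-two-sided ideal of `T` lying inside
`B`, so minimality of `A` forces `AΓBΓA = A` and hence `B = A`. -/

section GammaProduct

variable {T G : Type*} (mul : T → G → T → T)

theorem gprod_mono {A A' B B' : Set T} (hA : A ⊆ A') (hB : B ⊆ B') :
    gprod mul A B ⊆ gprod mul A' B' := by
  rintro _ ⟨a, ha, γ, b, hb, rfl⟩
  exact ⟨a, hA ha, γ, b, hB hb, rfl⟩

theorem gprod_nonempty [Nonempty G] {A B : Set T} (hA : A.Nonempty) (hB : B.Nonempty) :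
    (gprod mul A B).Nonempty := by
  obtain ⟨a, ha⟩ := hA
  obtain ⟨b, hb⟩ := hB
  obtain ⟨γ⟩ := ‹Nonempty G›
  exact ⟨mul a γ b, a, ha, γ, b, hb, rfl⟩

theorem gprod_assoc
    (assoc : ∀ (e f g : T) (α β : G), mul (mul e α f) β g = mul e α (mul f β g))
    (A B C : Set T) : gprod mul (gprod mul A B) C = gprod mul A (gprod mul B C) := by
  ext x
  constructor
  · rintro ⟨_, ⟨a, ha, α, b, hb, rfl⟩, β, c, hc, rfl⟩
    exact ⟨a, ha, α, mul b β c, ⟨b, hb, β, c, hc, rfl⟩, assoc ..⟩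
  · rintro ⟨a, ha, α, _, ⟨b, hb, β, c, hc, rfl⟩, rfl⟩
    exact ⟨mul a α b, ⟨a, ha, α, b, hb, rfl⟩, β, c, hc, (assoc ..).symm⟩

theorem gprod_gprod_subset_of_absorbs {A B : Set T}
    (hAB : gprod mul A B ⊆ B) (hBA : gprod mul B A ⊆ B) :
    gprod mul (gprod mul A B) A ⊆ B :=
  (gprod_mono mul hAB subset_rfl).trans hBA

theorem IsTwoSidedIdeal.gprod_gprod [Nonempty G]
    (assoc : ∀ (e f g : T) (α β : G), mul (mul e α f) β g = mul e α (mul f β g))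
    {A B : Set T} (hA : IsTwoSidedIdeal mul A) (hB : B.Nonempty) :
    IsTwoSidedIdeal mul (gprod mul (gprod mul A B) A) := by
  obtain ⟨⟨hAne, hAleft⟩, -, hAright⟩ := hA
  have hne := gprod_nonempty mul (gprod_nonempty mul hAne hB) hAne
  refine ⟨⟨hne, ?_⟩, hne, ?_⟩
  · rw [← gprod_assoc mul assoc, ← gprod_assoc mul assoc]
    exact gprod_mono mul (gprod_mono mul hAleft subset_rfl) subset_rfl
  · rw [gprod_assoc mul assoc]
    exact gprod_mono mul subset_rfl hAright

end GammaProduct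

theorem leastTwoSidedIdeal_is_simple_general {T G : Type*} [Nonempty G]
    (mul : T → G → T → T)
    (assoc : ∀ (e f g : T) (α β : G), mul (mul e α f) β g = mul e α (mul f β g))
    (A : Set T) (hA : IsLeastTwoSidedIdeal mul A) :
    ∀ B : Set T, B ⊆ A → B.Nonempty →
      gprod mul A B ⊆ B → gprod mul B A ⊆ B → B = A := by
  intro B hBA hBne hAB hBA'
  have hCB := gprod_gprod_subset_of_absorbs mul hAB hBA'
  have hCA : gprod mul (gprod mul A B) A = A :=
    hA.2 _ (hA.1.gprod_gprod mul assoc hBne) (hCB.trans hBA)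
  exact hBA.antisymm (hCA ▸ hCB)

theorem leastTwoSidedIdeal_is_simple {T G : Type*} [Nonempty T] [Nonempty G]
    (mul : T → G → T → T)
    (assoc : ∀ (e f g : T) (α β : G), mul (mul e α f) β g = mul e α (mul f β g))
    (A : Set T) (hA : IsLeastTwoSidedIdeal mul A) :
    ∀ B : Set T, B ⊆ A → B.Nonempty →
      gprod mul A B ⊆ B → gprod mul B A ⊆ B → B = A :=
  leastTwoSidedIdeal_is_simple_general mul assoc A hA
end

section
/- Let (T, Γ) be a Γ-semigroup with zero 0 and let H be a 0-least Γ-left ideal of T with HΓH ≠ {0}. Then for every nonzero element e ∈ H, TΓe = H. -/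
/-! The elements `x ∈ H` with `TΓx = {0}` form a left ideal inside `H`; it is not all of `H`
because `HΓH ≠ {0}`, so by minimality it is `{0}`. For `e ≠ 0` in `H`, `TΓe` is a left ideal
inside `H`, and it is not `{0}` since `e` lies outside that annihilator; hence `TΓe = H`. -/

section

variable {T G : Type*} {mul : T → G → T → T}

theorem IsLeftIdeal.gprod_univ_subset {H B : Set T} (hH : IsLeftIdeal mul H) (hB : B ⊆ H) :
    gprod mul Set.univ B ⊆ H := by
  rintro _ ⟨t, -, γ, b, hb, rfl⟩
  exact hH.2 ⟨t, trivial, γ, b, hB hb, rfl⟩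

theorem IsZero.mem_of_isLeftIdeal [Nonempty G] {z : T} (hz : IsZero mul z) {H : Set T}
    (hH : IsLeftIdeal mul H) : z ∈ H := by
  obtain ⟨h, hh⟩ := hH.1
  obtain ⟨γ⟩ := ‹Nonempty G›
  simpa only [(hz h γ).2] using hH.2 ⟨z, trivial, γ, h, hh, rfl⟩

theorem isLeftIdeal_gprod_univ_singleton [Nonempty G]
    (assoc : ∀ (e f g : T) (α β : G), mul (mul e α f) β g = mul e α (mul f β g)) (e : T) :
    IsLeftIdeal mul (gprod mul Set.univ {e}) := by
  obtain ⟨γ⟩ := ‹Nonempty G›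
  refine ⟨⟨mul e γ e, e, trivial, γ, e, rfl, rfl⟩, ?_⟩
  rintro _ ⟨s, -, β, _, ⟨t, -, α, b, hb, rfl⟩, rfl⟩
  exact ⟨mul s β t, trivial, α, b, hb, assoc s t b β α |>.symm⟩

def leftAnnihilator (mul : T → G → T → T) (z : T) (H : Set T) : Set T :=
  {x ∈ H | ∀ (t : T) (α : G), mul t α x = z}

theorem isLeftIdeal_leftAnnihilator [Nonempty G]
    (assoc : ∀ (e f g : T) (α β : G), mul (mul e α f) β g = mul e α (mul f β g))
    {z : T} (hz : IsZero mul z) {H : Set T} (hH : IsLeftIdeal mul H) :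
    IsLeftIdeal mul (leftAnnihilator mul z H) := by
  refine ⟨⟨z, hz.mem_of_isLeftIdeal hH, fun t α => (hz t α).1⟩, ?_⟩
  rintro _ ⟨s, -, β, x, ⟨hxH, hx⟩, rfl⟩
  refine ⟨hH.2 ⟨s, trivial, β, x, hxH, rfl⟩, fun t α => ?_⟩
  rw [← assoc]
  exact hx _ _

theorem gprod_leftAnnihilator_subset (A : Set T) (z : T) (H : Set T) :
    gprod mul A (leftAnnihilator mul z H) ⊆ {z} := by
  rintro _ ⟨a, -, γ, x, ⟨-, hx⟩, rfl⟩
  exact hx a γ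

theorem mem_leftAnnihilator_of_gprod_eq {z x : T} {H : Set T} (hx : x ∈ H)
    (h : gprod mul Set.univ {x} = {z}) : x ∈ leftAnnihilator mul z H :=
  ⟨hx, fun t α => h.subset ⟨t, trivial, α, x, rfl, rfl⟩⟩

theorem IsZeroLeastLeftIdeal.leftAnnihilator_eq [Nonempty G]
    (assoc : ∀ (e f g : T) (α β : G), mul (mul e α f) β g = mul e α (mul f β g))
    {z : T} (hz : IsZero mul z) {H : Set T} (hH : IsZeroLeastLeftIdeal mul z H)
    (hHH : gprod mul H H ≠ {z}) : leftAnnihilator mul z H = {z} := by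
  refine (hH.2.2 _ (isLeftIdeal_leftAnnihilator assoc hz hH.1) (Set.sep_subset _ _)).resolve_right
    fun hfull => hHH ?_
  obtain ⟨γ⟩ := ‹Nonempty G›
  have hzH := hz.mem_of_isLeftIdeal hH.1
  have hzHH : z ∈ gprod mul H H := ⟨z, hzH, γ, z, hzH, ((hz z γ).1).symm⟩
  refine (Set.Nonempty.subset_singleton_iff ⟨z, hzHH⟩).1 ?_
  simpa only [hfull] using gprod_leftAnnihilator_subset (mul := mul) H z H

end

theorem zeroLeastLeftIdeal_eq_TGe_general {T G : Type*} [Nonempty G]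
    (mul : T → G → T → T)
    (assoc : ∀ (e f g : T) (α β : G), mul (mul e α f) β g = mul e α (mul f β g))
    (z : T) (hz : IsZero mul z)
    (H : Set T) (hH : IsZeroLeastLeftIdeal mul z H)
    (hHH : gprod mul H H ≠ {z}) :
    ∀ e ∈ H, e ≠ z → gprod mul Set.univ {e} = H := by
  intro e he hez
  have hann := hH.leftAnnihilator_eq assoc hz hHH
  refine (hH.2.2 _ (isLeftIdeal_gprod_univ_singleton assoc e)
    (hH.1.gprod_univ_subset (Set.singleton_subset_iff.2 he))).resolve_left fun hTe => hez ?_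
  simpa only [hann, Set.mem_singleton_iff] using mem_leftAnnihilator_of_gprod_eq he hTe

theorem zeroLeastLeftIdeal_eq_TGe {T G : Type*} [Nonempty T] [Nonempty G]
    (mul : T → G → T → T)
    (assoc : ∀ (e f g : T) (α β : G), mul (mul e α f) β g = mul e α (mul f β g))
    (z : T) (hz : IsZero mul z)
    (H : Set T) (hH : IsZeroLeastLeftIdeal mul z H)
    (hHH : gprod mul H H ≠ {z}) :
    ∀ e ∈ H, e ≠ z → gprod mul Set.univ {e} = H :=
  zeroLeastLeftIdeal_eq_TGe_general mul assoc z hz H hH hHH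
end

section
/- Let (T, Γ) be a 0-simple Γ-semigroup with zero 0 that contains at least one 0-least Γ-left ideal and at least one 0-least Γ-right ideal. Then for each 0-least Γ-left ideal H of T there exists a 0-least Γ-right ideal I of T such that HΓI ≠ {0} and HΓI = T. -/
/-!
Let `R` be a 0-least Γ-right ideal. For a Γ-left ideal `A` and a Γ-right ideal `B` the product
`AΓB` is a Γ-two-sided ideal, so 0-simplicity forces `HΓT = T` and `TΓR = T`. Writing a nonzero
element as `x = hα(tγr)` with `h ∈ H`, `r ∈ R`, the translate `I = tγR` is again a 0-least
Γ-right ideal, and `HΓI` is a two-sided ideal containing `x ≠ 0`, hence equal to `T`.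
-/

section GammaSemigroup

variable {T G : Type*} {mul : T → G → T → T} {z : T}

theorem mul_mem_gprod {A B : Set T} {a b : T} (ha : a ∈ A) (γ : G) (hb : b ∈ B) :
    mul a γ b ∈ gprod mul A B :=
  ⟨a, ha, γ, b, hb, rfl⟩

theorem IsLeftIdeal.zero_mem [Nonempty G] (hz : IsZero mul z) {B : Set T}
    (hB : IsLeftIdeal mul B) : z ∈ B := by
  obtain ⟨b, hb⟩ := hB.1
  let γ : G := Classical.arbitrary G
  simpa only [(hz b γ).2] using hB.2 (mul_mem_gprod (Set.mem_univ z) γ hb)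

theorem IsRightIdeal.zero_mem [Nonempty G] (hz : IsZero mul z) {B : Set T}
    (hB : IsRightIdeal mul B) : z ∈ B := by
  obtain ⟨b, hb⟩ := hB.1
  let γ : G := Classical.arbitrary G
  simpa only [(hz b γ).1] using hB.2 (mul_mem_gprod hb γ (Set.mem_univ z))

theorem isLeftIdeal_univ [Nonempty T] : IsLeftIdeal mul (Set.univ : Set T) :=
  ⟨Set.univ_nonempty, Set.subset_univ _⟩

theorem isRightIdeal_univ [Nonempty T] : IsRightIdeal mul (Set.univ : Set T) :=
  ⟨Set.univ_nonempty, Set.subset_univ _⟩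

theorem IsLeftIdeal.isTwoSidedIdeal_gprod [Nonempty G]
    (assoc : ∀ (e f g : T) (α β : G), mul (mul e α f) β g = mul e α (mul f β g))
    {A B : Set T} (hA : IsLeftIdeal mul A) (hB : IsRightIdeal mul B) :
    IsTwoSidedIdeal mul (gprod mul A B) := by
  obtain ⟨a, ha⟩ := hA.1
  obtain ⟨b, hb⟩ := hB.1
  have hne : (gprod mul A B).Nonempty := ⟨_, mul_mem_gprod ha (Classical.arbitrary G) hb⟩
  refine ⟨⟨hne, ?_⟩, ⟨hne, ?_⟩⟩
  · rintro _ ⟨s, -, β, _, ⟨a, ha, γ, b, hb, rfl⟩, rfl⟩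
    rw [← assoc]
    exact mul_mem_gprod (hA.2 (mul_mem_gprod (Set.mem_univ s) β ha)) γ hb
  · rintro _ ⟨_, ⟨a, ha, γ, b, hb, rfl⟩, β, s, -, rfl⟩
    rw [assoc]
    exact mul_mem_gprod ha γ (hB.2 (mul_mem_gprod hb β (Set.mem_univ s)))

theorem IsZeroSimple.eq_univ (hzs : IsZeroSimple mul z) {B : Set T}
    (hB : IsTwoSidedIdeal mul B) (hBz : B ≠ {z}) : B = Set.univ :=
  (hzs.2 B hB).resolve_left hBz

/-- If `TΓR` were `{0}`, the right ideal `R ∋ 0` would be two-sided, hence `R = T` and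
`TΓT = {0}`. -/
theorem IsZeroSimple.gprod_univ_eq_univ_of_isRightIdeal [Nonempty G]
    (assoc : ∀ (e f g : T) (α β : G), mul (mul e α f) β g = mul e α (mul f β g))
    (hz : IsZero mul z) (hzs : IsZeroSimple mul z) {R : Set T}
    (hR : IsRightIdeal mul R) (hRz : R ≠ {z}) : gprod mul Set.univ R = Set.univ := by
  have : Nonempty T := ⟨z⟩
  refine hzs.eq_univ (isLeftIdeal_univ.isTwoSidedIdeal_gprod assoc hR) fun hTR => hzs.1 ?_
  have hRleft : gprod mul Set.univ R ⊆ R := hTR.subset.trans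
    (Set.singleton_subset_iff.2 (hR.zero_mem hz))
  rwa [hzs.eq_univ ⟨⟨hR.1, hRleft⟩, hR⟩ hRz] at hTR

theorem IsZeroSimple.gprod_univ_eq_univ_of_isLeftIdeal [Nonempty G]
    (assoc : ∀ (e f g : T) (α β : G), mul (mul e α f) β g = mul e α (mul f β g))
    (hz : IsZero mul z) (hzs : IsZeroSimple mul z) {H : Set T}
    (hH : IsLeftIdeal mul H) (hHz : H ≠ {z}) : gprod mul H Set.univ = Set.univ := by
  have : Nonempty T := ⟨z⟩
  refine hzs.eq_univ (hH.isTwoSidedIdeal_gprod assoc isRightIdeal_univ) fun hHT => hzs.1 ?_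
  have hHright : gprod mul H Set.univ ⊆ H := hHT.subset.trans
    (Set.singleton_subset_iff.2 (hH.zero_mem hz))
  rwa [hzs.eq_univ ⟨hH, ⟨hH.1, hHright⟩⟩ hHz] at hHT

theorem IsRightIdeal.image_mul_left
    (assoc : ∀ (e f g : T) (α β : G), mul (mul e α f) β g = mul e α (mul f β g))
    {R : Set T} (hR : IsRightIdeal mul R) (t : T) (γ : G) :
    IsRightIdeal mul (mul t γ '' R) := by
  refine ⟨hR.1.image _, ?_⟩
  rintro _ ⟨_, ⟨r, hr, rfl⟩, β, s, -, rfl⟩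
  rw [assoc]
  exact Set.mem_image_of_mem _ (hR.2 (mul_mem_gprod hr β (Set.mem_univ s)))

/-- A right ideal `B ⊆ tγR` is the translate of the right ideal `{r ∈ R | tγr ∈ B}`. -/
theorem IsZeroLeastRightIdeal.image_mul_left
    (assoc : ∀ (e f g : T) (α β : G), mul (mul e α f) β g = mul e α (mul f β g))
    (hz : IsZero mul z) {R : Set T} (hR : IsZeroLeastRightIdeal mul z R) (t : T) (γ : G)
    (hne : mul t γ '' R ≠ {z}) : IsZeroLeastRightIdeal mul z (mul t γ '' R) := by
  refine ⟨hR.1.image_mul_left assoc t γ, hne, fun B hB hBI => ?_⟩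
  set C : Set T := R ∩ mul t γ ⁻¹' B
  have hBC : B ⊆ mul t γ '' C := by
    intro b hb
    obtain ⟨r, hr, rfl⟩ := hBI hb
    exact ⟨r, ⟨hr, hb⟩, rfl⟩
  have hC : IsRightIdeal mul C := by
    obtain ⟨b, hb⟩ := hB.1
    refine ⟨(hBC hb).imp fun r hr => hr.1, ?_⟩
    rintro _ ⟨r, ⟨hr, hrB⟩, β, s, -, rfl⟩
    refine ⟨hR.1.2 (mul_mem_gprod hr β (Set.mem_univ s)), ?_⟩
    rw [Set.mem_preimage, ← assoc]
    exact hB.2 (mul_mem_gprod (Set.mem_preimage.1 hrB) β (Set.mem_univ s))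
  rcases hR.2.2 C hC Set.inter_subset_left with hCz | hCR
  · left
    rw [← hB.1.subset_singleton_iff]
    simpa only [hCz, Set.image_singleton, (hz t γ).1] using hBC
  · right
    refine hBI.antisymm ?_
    rw [← hCR]
    exact Set.image_subset_iff.2 Set.inter_subset_right

end GammaSemigroup

theorem exists_zeroLeastRight_with_prod_univ_general {T G : Type*} [Nonempty G]
    (mul : T → G → T → T)
    (assoc : ∀ (e f g : T) (α β : G), mul (mul e α f) β g = mul e α (mul f β g))
    (z : T) (hz : IsZero mul z)
    (hzs : IsZeroSimple mul z)
    (hexR : ∃ R : Set T, IsZeroLeastRightIdeal mul z R) :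
    ∀ H : Set T, IsZeroLeastLeftIdeal mul z H →
      ∃ I : Set T, IsZeroLeastRightIdeal mul z I ∧
        gprod mul H I ≠ {z} ∧ gprod mul H I = Set.univ := by
  obtain ⟨R, hR⟩ := hexR
  rintro H ⟨hH, hHz, -⟩
  obtain ⟨x, -, hxz⟩ : ∃ x ∈ H, x ≠ z := by
    by_contra! hHsub
    exact hHz (hH.1.subset_singleton_iff.1 hHsub)
  obtain ⟨h, hh, α, w, -, rfl⟩ : x ∈ gprod mul H Set.univ := by
    rw [hzs.gprod_univ_eq_univ_of_isLeftIdeal assoc hz hH hHz]; trivial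
  obtain ⟨t, -, γ, r, hr, rfl⟩ : w ∈ gprod mul Set.univ R := by
    rw [hzs.gprod_univ_eq_univ_of_isRightIdeal assoc hz hR.1 hR.2.1]; trivial
  have htr : mul t γ r ∈ mul t γ '' R := Set.mem_image_of_mem _ hr
  have hI : IsZeroLeastRightIdeal mul z (mul t γ '' R) := by
    refine hR.image_mul_left assoc hz t γ fun hIz => hxz ?_
    rw [hIz.subset htr, (hz h α).1]
  have hxHI : mul h α (mul t γ r) ∈ gprod mul H (mul t γ '' R) := mul_mem_gprod hh α htr
  have hHIz : gprod mul H (mul t γ '' R) ≠ {z} := fun hHIz => hxz (hHIz.subset hxHI)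
  exact ⟨_, hI, hHIz, hzs.eq_univ (hH.isTwoSidedIdeal_gprod assoc hI.1) hHIz⟩

theorem exists_zeroLeastRight_with_prod_univ {T G : Type*} [Nonempty T] [Nonempty G]
    (mul : T → G → T → T)
    (assoc : ∀ (e f g : T) (α β : G), mul (mul e α f) β g = mul e α (mul f β g))
    (z : T) (hz : IsZero mul z)
    (hzs : IsZeroSimple mul z)
    (hexL : ∃ L : Set T, IsZeroLeastLeftIdeal mul z L)
    (hexR : ∃ R : Set T, IsZeroLeastRightIdeal mul z R) :
    ∀ H : Set T, IsZeroLeastLeftIdeal mul z H →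
      ∃ I : Set T, IsZeroLeastRightIdeal mul z I ∧
        gprod mul H I ≠ {z} ∧ gprod mul H I = Set.univ :=
  exists_zeroLeastRight_with_prod_univ_general mul assoc z hz hzs hexR
end
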